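/- After filling in the cycle corresponding to |00⟩ in I(G_2) by adding mediator m connected (in the graph) to b_1 and b_2, the first homology of the resulting independence complex I(G_2') over ℂ has dimension 3. -/

import Mathlib

/-- An abstract simplicial complex on vertex type `V`, given as a collection of
finite vertex sets (faces) containing the empty set and closed under subsets. -/
structure SComplex (V : Type*) where
  faces : Set (Finset V)
  empty_mem : ∅ ∈ faces
  down_closed : ∀ s ∈ faces, ∀ t ⊆ s, t ∈ faces

/-- The space of simplicial `ℂ`-chains spanned by the faces of cardinality `c`
(i.e. the simplices of dimension `c - 1`). -/
abbrev SComplex.chain {V : Type*} (K : SComplex V) (c : ℕ) :=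
  {s : Finset V // s ∈ K.faces ∧ s.card = c} → ℂ

/-- The simplicial boundary operator, sending an oriented simplex (a face with the
orientation induced by the linear order on the vertices) to the alternating sum of
its codimension-one faces. -/
noncomputable def SComplex.bdry {V : Type*} [Fintype V] [LinearOrder V]
    (K : SComplex V) (c : ℕ) : K.chain (c + 1) →ₗ[ℂ] K.chain c :=
  haveI : Fintype {s : Finset V // s ∈ K.faces ∧ s.card = c + 1} := Fintype.ofFinite _
  ∑ s : {s : Finset V // s ∈ K.faces ∧ s.card = c + 1},
    ∑ x ∈ s.1.attach,
      (LinearMap.proj s).smulRight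
        (Pi.single
            (⟨s.1.erase x.1,
              K.down_closed s.1 s.2.1 _ (Finset.erase_subset _ _),
              by simp [Finset.card_erase_of_mem x.2, s.2.2]⟩ :
              {t : Finset V // t ∈ K.faces ∧ t.card = c})
            ((-1 : ℂ) ^ ((s.1.filter (fun y => y < x.1)).card)))

/-- Reduced simplicial homology with `ℂ` coefficients in degree `p`:
cycles of dimension `p` (faces of cardinality `p+1`) modulo boundaries.  Since the
empty face is included as a generator in degree `-1`, the boundary map in degree `0`
is the augmentation, so this computes *reduced* homology. -/
noncomputable def SComplex.redHomology {V : Type*} [Fintype V] [LinearOrder V]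
    (K : SComplex V) (p : ℕ) :=
  LinearMap.ker (K.bdry p) ⧸
    (LinearMap.range (K.bdry (p + 1))).comap (LinearMap.ker (K.bdry p)).subtype

noncomputable instance {V : Type*} [Fintype V] [LinearOrder V]
    (K : SComplex V) (p : ℕ) : AddCommGroup (K.redHomology p) := by
  delta SComplex.redHomology; infer_instance

noncomputable instance {V : Type*} [Fintype V] [LinearOrder V]
    (K : SComplex V) (p : ℕ) : Module ℂ (K.redHomology p) := by
  delta SComplex.redHomology; infer_instance

/-- The independence complex of a simple graph: faces are the independent sets. -/
def indepComplex {V : Type*} (G : SimpleGraph V) : SComplex V where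
  faces := {s | ∀ u ∈ s, ∀ v ∈ s, ¬ G.Adj u v}
  empty_mem := by simp
  down_closed := fun s hs t hts u hu v hv => hs u (hts hu) v (hts hv)


/-- The graph `G₂'`, obtained from the two disjoint triangles `G₂` (vertices
`x₁ = 0, a₁ = 1, b₁ = 2, x₂ = 3, a₂ = 4, b₂ = 5`) by adding the mediator vertex
`m = 6` adjacent exactly to `b₁ = 2` and `b₂ = 5`.  Adding the mediator fills in
the 1-cycle of the independence complex corresponding to the state `|00⟩`. -/
def G2' : SimpleGraph (Fin 7) where
  Adj u v := u ≠ v ∧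
    (((u : ℕ) < 6 ∧ (v : ℕ) < 6 ∧ (u : ℕ) / 3 = (v : ℕ) / 3)
      ∨ ((u : ℕ) = 6 ∧ ((v : ℕ) = 2 ∨ (v : ℕ) = 5))
      ∨ ((v : ℕ) = 6 ∧ ((u : ℕ) = 2 ∨ (u : ℕ) = 5)))
  symm := ⟨fun u v h => ⟨h.1.symm, by tauto⟩⟩
  loopless := ⟨fun u h => h.1 rfl⟩

namespace FillAux

open Matrix LinearMap

lemma bdry_single_apply {V : Type*} [Fintype V] [LinearOrder V]
    (K : SComplex V) (c : ℕ)
    (s0 : {s : Finset V // s ∈ K.faces ∧ s.card = c + 1})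
    (t : {s : Finset V // s ∈ K.faces ∧ s.card = c}) :
    K.bdry c (fun s' => if s' = s0 then 1 else 0) t
      = ∑ x ∈ s0.1, (if s0.1.erase x = t.1
          then ((-1 : ℂ)) ^ ((s0.1.filter (fun y => y < x)).card) else 0) := by
  haveI FT : Fintype {s : Finset V // s ∈ K.faces ∧ s.card = c + 1} := Fintype.ofFinite _
  rw [SComplex.bdry]
  simp only [LinearMap.coe_sum, Finset.sum_apply, LinearMap.smulRight_apply,
    LinearMap.proj_apply, Pi.smul_apply, smul_eq_mul]
  rw [Subsingleton.elim (Fintype.ofFinite {s : Finset V // s ∈ K.faces ∧ s.card = c + 1}) FT]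
  rw [Finset.sum_eq_single_of_mem s0 (Finset.mem_univ _)]
  · rw [if_pos rfl]
    simp only [one_mul, Pi.single_apply, Subtype.ext_iff]
    rw [← Finset.sum_attach s0.1 (fun x => if (s0.1.erase x = t.1)
        then ((-1:ℂ)) ^ ((s0.1.filter (fun y => y < x)).card) else 0)]
    exact Finset.sum_congr rfl (fun x _ => if_congr eq_comm rfl rfl)
  · intro b _ hb
    rw [if_neg hb]
    simp

instance decAdj : DecidableRel G2'.Adj := fun u v =>
  decidable_of_iff (u ≠ v ∧
    (((u : ℕ) < 6 ∧ (v : ℕ) < 6 ∧ (u : ℕ) / 3 = (v : ℕ) / 3)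
      ∨ ((u : ℕ) = 6 ∧ ((v : ℕ) = 2 ∨ (v : ℕ) = 5))
      ∨ ((v : ℕ) = 6 ∧ ((u : ℕ) = 2 ∨ (u : ℕ) = 5)))) Iff.rfl

instance decFaces : DecidablePred (· ∈ (indepComplex G2').faces) := fun s =>
  decidable_of_iff (∀ u ∈ s, ∀ v ∈ s, ¬ G2'.Adj u v) Iff.rfl

abbrev F (c : ℕ) := {s : Finset (Fin 7) // s ∈ (indepComplex G2').faces ∧ s.card = c}

def vlist : Fin 7 → Finset (Fin 7) := ![{0},{1},{2},{3},{4},{5},{6}]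
def elist : Fin 13 → Finset (Fin 7) :=
  ![{0,3},{0,4},{0,5},{1,3},{1,4},{1,5},{2,3},{2,4},{2,5},{0,6},{1,6},{3,6},{4,6}]
def tlist : Fin 4 → Finset (Fin 7) := ![{0,3,6},{0,4,6},{1,3,6},{1,4,6}]

def vF : Fin 7 → F 1 := fun i => ⟨vlist i, by revert i; decide⟩
def eF : Fin 13 → F 2 := fun i => ⟨elist i, by revert i; decide⟩
def tF : Fin 4 → F 3 := fun i => ⟨tlist i, by revert i; decide⟩

noncomputable def eV : Fin 7 ≃ F 1 := Equiv.ofBijective vF (by decide)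
noncomputable def eE : Fin 13 ≃ F 2 := Equiv.ofBijective eF (by decide)
noncomputable def eT : Fin 4 ≃ F 3 := Equiv.ofBijective tF (by decide)

def M1 : Matrix (Fin 7) (Fin 13) ℤ :=
!![-1, -1, -1, 0, 0, 0, 0, 0, 0, -1, 0, 0, 0;
   0, 0, 0, -1, -1, -1, 0, 0, 0, 0, -1, 0, 0;
   0, 0, 0, 0, 0, 0, -1, -1, -1, 0, 0, 0, 0;
   1, 0, 0, 1, 0, 0, 1, 0, 0, 0, 0, -1, 0;
   0, 1, 0, 0, 1, 0, 0, 1, 0, 0, 0, 0, -1;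
   0, 0, 1, 0, 0, 1, 0, 0, 1, 0, 0, 0, 0;
   0, 0, 0, 0, 0, 0, 0, 0, 0, 1, 1, 1, 1]

def M2 : Matrix (Fin 13) (Fin 4) ℤ :=
!![1, 0, 0, 0;
   0, 1, 0, 0;
   0, 0, 0, 0;
   0, 0, 1, 0;
   0, 0, 0, 1;
   0, 0, 0, 0;
   0, 0, 0, 0;
   0, 0, 0, 0;
   0, 0, 0, 0;
   -1, -1, 0, 0;
   0, 0, -1, -1;
   1, 0, 1, 0;
   0, 1, 0, 1]

noncomputable def M1C : Matrix (Fin 7) (Fin 13) ℂ := M1.map (Int.castRingHom ℂ)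
noncomputable def M2C : Matrix (Fin 13) (Fin 4) ℂ := M2.map (Int.castRingHom ℂ)

def coef (s t : Finset (Fin 7)) : ℤ :=
  ∑ x ∈ s, (if s.erase x = t then (-1 : ℤ) ^ ((s.filter (fun y => y < x)).card) else 0)

lemma coef_cast (s t : Finset (Fin 7)) :
    ((coef s t : ℤ) : ℂ)
      = ∑ x ∈ s, (if s.erase x = t
          then ((-1 : ℂ)) ^ ((s.filter (fun y => y < x)).card) else 0) := by
  rw [coef]
  push_cast [apply_ite (Int.cast : ℤ → ℂ)]
  rfl

lemma key1 : ∀ (j : Fin 7) (i : Fin 13), coef (elist i) (vlist j) = M1 j i := by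
  intro j; fin_cases j <;> decide
lemma key2 : ∀ (j : Fin 13) (i : Fin 4), coef (tlist i) (elist j) = M2 j i := by
  intro j; fin_cases j <;> decide

lemma tm1 : LinearMap.toMatrix' ((indepComplex G2').bdry 1)
    = M1C.submatrix (⇑eV.symm) (⇑eE.symm) := by
  ext t s
  obtain ⟨j, rfl⟩ := eV.surjective t
  obtain ⟨i, rfl⟩ := eE.surjective s
  rw [LinearMap.toMatrix'_apply, Matrix.submatrix_apply,
    Equiv.symm_apply_apply, Equiv.symm_apply_apply,
    show M1C j i = ((M1 j i : ℤ) : ℂ) from rfl, ← key1 j i, coef_cast]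
  convert bdry_single_apply (indepComplex G2') 1 (eE i) (eV j) using 2 <;> congr! <;> exact Pi.single_apply _ _ _

lemma tm2 : LinearMap.toMatrix' ((indepComplex G2').bdry 2)
    = M2C.submatrix (⇑eE.symm) (⇑eT.symm) := by
  ext t s
  obtain ⟨j, rfl⟩ := eE.surjective t
  obtain ⟨i, rfl⟩ := eT.surjective s
  rw [LinearMap.toMatrix'_apply, Matrix.submatrix_apply,
    Equiv.symm_apply_apply, Equiv.symm_apply_apply,
    show M2C j i = ((M2 j i : ℤ) : ℂ) from rfl, ← key2 j i, coef_cast]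
  convert bdry_single_apply (indepComplex G2') 2 (eT i) (eE j) using 2 <;> congr! <;> exact Pi.single_apply _ _ _

lemma rank_submatrix_equiv {R : Type*} [CommRing R] {m n m' n' : Type*}
    [Fintype n] [Fintype n'] [Fintype m] [Fintype m']
    (A : Matrix m n R) (e1 : m' ≃ m) (e2 : n' ≃ n) :
    (A.submatrix ⇑e1 ⇑e2).rank = A.rank := by
  have h : A.submatrix ⇑e1 ⇑e2 = Matrix.reindex e1.symm e2.symm A := by
    simp [Matrix.reindex_apply]
  rw [h, Matrix.rank, Matrix.rank, Matrix.mulVecLin_reindex, LinearMap.range_comp,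
    LinearMap.range_comp, LinearEquiv.range, Submodule.map_top, LinearEquiv.finrank_map_eq]

lemma finrank_range_eq_rank {n m : Type*} [Fintype n] [Fintype m] [DecidableEq n]
    (f : (n → ℂ) →ₗ[ℂ] (m → ℂ)) :
    Module.finrank ℂ (LinearMap.range f) = (LinearMap.toMatrix' f).rank := by
  rw [Matrix.rank, ← Matrix.toLin'_apply', Matrix.toLin'_toMatrix']

def A6 : Matrix (Fin 7) (Fin 6) ℤ :=
!![1,0,0,0,0,0; 0,1,0,0,0,0; 0,0,1,0,0,0; 0,0,0,1,0,0;
   0,0,0,0,1,0; 0,0,0,0,0,1; -1,-1,-1,-1,-1,-1]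
def B6 : Matrix (Fin 6) (Fin 13) ℤ :=
  M1.submatrix (Fin.castLE (show (6:ℕ) ≤ 7 by norm_num)) _root_.id
lemma hA6B6 : M1 = A6 * B6 := by decide

def Q1 : Matrix (Fin 6) (Fin 7) ℤ := fun i j => if (j : ℕ) = (i : ℕ) then 1 else 0
def P1 : Matrix (Fin 13) (Fin 6) ℤ :=
!![0, 0, 0, 0, 0, 0;
   0, 0, 0, 0, 0, 0;
   0, 0, 0, 0, 0, 1;
   0, 0, 0, 0, 0, 0;
   0, 0, 0, 0, 0, 0;
   0, 0, 0, 0, 0, 0;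
   0, 0, -1, 0, 0, 0;
   0, 0, 0, 0, 0, 0;
   0, 0, 0, 0, 0, 0;
   -1, 0, 0, 0, 0, -1;
   0, -1, 0, 0, 0, 0;
   0, 0, -1, -1, 0, 0;
   0, 0, 0, 0, -1, 0]
def Q2 : Matrix (Fin 4) (Fin 13) ℤ := fun i j => if (j : ℕ) = [0,1,3,4].get i then 1 else 0

lemma hQ1P1 : Q1 * M1 * P1 = 1 := by decide
lemma hQ2 : Q2 * M2 = 1 := by decide
lemma hM1M2 : M1 * M2 = 0 := by decide

lemma rankM1C : M1C.rank = 6 := by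
  refine le_antisymm ?_ ?_
  · have : M1C = (A6.map (Int.castRingHom ℂ)) * (B6.map (Int.castRingHom ℂ)) := by
      rw [M1C, hA6B6, Matrix.map_mul]
    rw [this]
    exact le_trans (Matrix.rank_mul_le_right _ _)
      (le_trans (Matrix.rank_le_card_height _) (by simp))
  · have h : (Q1.map (Int.castRingHom ℂ)) * M1C * (P1.map (Int.castRingHom ℂ)) = 1 := by
      rw [M1C, ← Matrix.map_mul, ← Matrix.map_mul, hQ1P1]
      exact Matrix.map_one _ (map_zero _) (map_one _)
    calc (6 : ℕ) = (1 : Matrix (Fin 6) (Fin 6) ℂ).rank := by simp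
    _ = ((Q1.map (Int.castRingHom ℂ)) * M1C * (P1.map (Int.castRingHom ℂ))).rank := by rw [h]
    _ ≤ ((Q1.map (Int.castRingHom ℂ)) * M1C).rank := Matrix.rank_mul_le_left _ _
    _ ≤ M1C.rank := Matrix.rank_mul_le_right _ _

lemma rankM2C : M2C.rank = 4 := by
  refine le_antisymm (le_trans (Matrix.rank_le_card_width _) (by simp)) ?_
  have h : (Q2.map (Int.castRingHom ℂ)) * M2C = 1 := by
    rw [M2C, ← Matrix.map_mul, hQ2]
    exact Matrix.map_one _ (map_zero _) (map_one _)
  calc (4 : ℕ) = (1 : Matrix (Fin 4) (Fin 4) ℂ).rank := by simp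
  _ = ((Q2.map (Int.castRingHom ℂ)) * M2C).rank := by rw [h]
  _ ≤ M2C.rank := Matrix.rank_mul_le_right _ _

lemma comp_zero : (indepComplex G2').bdry 1 ∘ₗ (indepComplex G2').bdry 2 = 0 := by
  apply LinearMap.toMatrix'.injective
  rw [LinearMap.toMatrix'_comp, tm1, tm2, Matrix.submatrix_mul_equiv]
  have : M1C * M2C = 0 := by
    rw [M1C, M2C, ← Matrix.map_mul, hM1M2]
    simp
  rw [this]
  simp

lemma cardF2 : Fintype.card (F 2) = 13 := by decide

end FillAux

set_option synthInstance.maxHeartbeats 1000000 in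
set_option maxHeartbeats 2000000 in
open FillAux in
/-- After filling in the cycle corresponding to `|00⟩` in `I(G₂)` by adding the
mediator `m` connected (in the graph) to `b₁` and `b₂`, the first homology of the
resulting independence complex `I(G₂')` over `ℂ` has dimension 3 (one less than
the dimension 4 of `H₁(I(G₂))`). -/
theorem homology_after_filling_00 :
    Module.finrank ℂ ((indepComplex G2').redHomology 1) = 3 := by
  have hle : LinearMap.range ((indepComplex G2').bdry 2)
      ≤ LinearMap.ker ((indepComplex G2').bdry 1) :=
    LinearMap.range_le_ker_iff.mpr comp_zero
  have hrfl : Module.finrank ℂ ((indepComplex G2').redHomology 1)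
      = Module.finrank ℂ
        (LinearMap.ker ((indepComplex G2').bdry 1) ⧸
          (LinearMap.range ((indepComplex G2').bdry 2)).comap
            (LinearMap.ker ((indepComplex G2').bdry 1)).subtype) := rfl
  have hr1 : Module.finrank ℂ (LinearMap.range ((indepComplex G2').bdry 1)) = 6 := by
    rw [finrank_range_eq_rank, tm1, rank_submatrix_equiv, rankM1C]
  have hr2 : Module.finrank ℂ (LinearMap.range ((indepComplex G2').bdry 2)) = 4 := by
    rw [finrank_range_eq_rank, tm2, rank_submatrix_equiv, rankM2C]
  have hker : Module.finrank ℂ (LinearMap.ker ((indepComplex G2').bdry 1)) = 7 := by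
    have := LinearMap.finrank_range_add_finrank_ker ((indepComplex G2').bdry 1)
    rw [hr1, Module.finrank_pi, cardF2] at this
    omega
  have hN : Module.finrank ℂ
      ((LinearMap.range ((indepComplex G2').bdry 2)).comap
        (LinearMap.ker ((indepComplex G2').bdry 1)).subtype) = 4 := by
    rw [(Submodule.comapSubtypeEquivOfLe hle).finrank_eq, hr2]
  have hq := Submodule.finrank_quotient_add_finrank
    ((LinearMap.range ((indepComplex G2').bdry 2)).comap
      (LinearMap.ker ((indepComplex G2').bdry 1)).subtype)
  rw [hN, hker] at hq
  rw [hrfl]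
  omega
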